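/- arXiv:2604.04678 — 3 statements merged into one kernel-verified Lean document; each statement's English description precedes it below -/
import Mathlib

section
/- Let q be a power of 2 and S_0 = F_{q^2} \ F_q. The map β ↦ β^{q+1}/(β^q + β) from S_0 to F_q^* is well defined, and each fiber has exactly q elements; in particular S_0 is partitioned into q − 1 subsets of size q. -/
/-!
The fixed points of `x ↦ x ^ q` in a field with `q ^ 2` elements are `0` and the `(q - 1)`-th
roots of unity of the cyclic group `Kˣ`, so there are `q` of them. Norm and trace are fixed by
`x ↦ x ^ q`, hence so is `N β / Tr β`, and in characteristic `2` the trace `β ^ q + β` vanishes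
only on fixed points. Dividing `β ^ (q + 1) = b * (β ^ q + β)` by `β` shows that the fibre over
`b ≠ 0` consists of roots of `X ^ q - b X ^ (q - 1) - b`, so it has at most `q` elements; the
`q - 1` fibres cover the `q ^ 2 - q` elements of `S₀`, so each has exactly `q`.
-/

open Finset Polynomial

theorem Set.ncard_filter_eq_of_ncard_eq_mul {ι M : Type*} {s : Set ι} {t : Set M} {f : ι → M}
    {n : ℕ} (hs : s.Finite) (ht : t.Finite) (hf : s.MapsTo f t)
    (hle : ∀ b ∈ t, {a ∈ s | f a = b}.ncard ≤ n) (hcard : s.ncard = t.ncard * n) :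
    ∀ b ∈ t, {a ∈ s | f a = b}.ncard = n := by
  classical
  obtain ⟨s, rfl⟩ := hs.exists_finset_coe
  obtain ⟨t, rfl⟩ := ht.exists_finset_coe
  have hfiber (b : M) : {a ∈ (s : Set ι) | f a = b}.ncard = #{a ∈ s | f a = b} := by
    rw [← Set.ncard_coe_finset, Finset.coe_filter]
    rfl
  simp only [hfiber, Set.ncard_coe_finset] at hle hcard ⊢
  rw [card_eq_sum_card_fiberwise hf, ← smul_eq_mul, ← sum_const] at hcard
  exact (sum_eq_sum_iff_of_le hle).1 hcard

namespace FiniteField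

variable {K : Type*} [Field K] [Fintype K] {q : ℕ}

theorem two_le_of_card_eq_sq (hK : Fintype.card K = q ^ 2) : 2 ≤ q := by
  have := Fintype.one_lt_card (α := K)
  by_contra! h
  interval_cases q <;> simp_all

theorem exists_isPrimitiveRoot_card_sub_one :
    ∃ ζ : K, IsPrimitiveRoot ζ (Fintype.card K - 1) := by
  classical
  obtain ⟨g, hg⟩ := IsCyclic.exists_ofOrder_eq_natCard (α := Kˣ)
  refine ⟨g, IsPrimitiveRoot.coe_units_iff.2 ?_⟩
  rw [← Fintype.card_units, ← Nat.card_eq_fintype_card, ← hg]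
  exact IsPrimitiveRoot.orderOf g

theorem ncard_setOf_pow_eq_self_of_card_eq_sq (hK : Fintype.card K = q ^ 2) :
    {x : K | x ^ q = x}.ncard = q := by
  classical
  have hq := two_le_of_card_eq_sq hK
  have hsq : q ^ 2 - 1 = (q + 1) * (q - 1) := by simpa using Nat.sq_sub_sq q 1
  obtain ⟨ζ, hζ⟩ := exists_isPrimitiveRoot_card_sub_one (K := K)
  have hroot : IsPrimitiveRoot (ζ ^ (q + 1)) (q - 1) := by
    rw [hK, hsq] at hζ
    simpa using hζ.pow_of_dvd (p := q + 1) (by omega) (dvd_mul_right _ _)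
  have hset : {x : K | x ^ q = x} = ↑(insert 0 (nthRootsFinset (q - 1) (1 : K))) := by
    ext x
    rw [Set.mem_ofPred_eq, coe_insert, Set.mem_insert_iff, mem_coe, mem_nthRootsFinset (by omega),
      ← mul_pow_sub_one (by omega), mul_right_eq_self₀, or_comm]
  rw [hset, Set.ncard_coe_finset, card_insert_of_notMem, hroot.card_nthRootsFinset]
  · omega
  · rw [mem_nthRootsFinset (by omega), zero_pow (by omega)]
    exact zero_ne_one

theorem pow_pow_eq_self_of_card_eq_sq (hK : Fintype.card K = q ^ 2) (x : K) :
    (x ^ q) ^ q = x := by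
  rw [← pow_mul, ← sq, ← hK, FiniteField.pow_card]

theorem norm_div_trace_pow_eq_self {p m : ℕ} [ExpChar K p] (hq : q = p ^ m)
    (hK : Fintype.card K = q ^ 2) (β : K) :
    (β ^ (q + 1) / (β ^ q + β)) ^ q = β ^ (q + 1) / (β ^ q + β) := by
  have hN : (β ^ (q + 1)) ^ q = β ^ (q + 1) := by
    rw [pow_right_comm, pow_succ, pow_pow_eq_self_of_card_eq_sq hK, ← pow_succ']
  have hT : (β ^ q + β) ^ q = β ^ q + β := by
    rw [hq, add_pow_expChar_pow, ← hq, pow_pow_eq_self_of_card_eq_sq hK, add_comm]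
  rw [div_pow, hN, hT]

end FiniteField

section

variable {K : Type*} [Field K] {q : ℕ}

theorem norm_div_trace_ne_zero [CharP K 2] (hq : q ≠ 0) {β : K} (hβ : β ^ q ≠ β) :
    β ^ (q + 1) / (β ^ q + β) ≠ 0 := by
  have hβ0 : β ≠ 0 := by rintro rfl; exact hβ (zero_pow hq)
  exact div_ne_zero (pow_ne_zero _ hβ0) (fun h => hβ (CharTwo.add_eq_zero.1 h))

theorem ncard_setOf_norm_div_trace_eq_le (hq : q ≠ 0) {b : K} (hb : b ≠ 0) :
    {β : K | β ^ q ≠ β ∧ β ^ (q + 1) / (β ^ q + β) = b}.ncard ≤ q := by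
  classical
  set P : K[X] := X ^ q - C b * X ^ (q - 1) - C b
  have hdeg : P.natDegree ≤ q := by simp only [P]; compute_degree
  have hP : P ≠ 0 := by
    intro h
    have := congrArg (coeff · q) h
    simp [P, coeff_X_pow, coeff_C, hq, show q ≠ q - 1 by omega] at this
  have hsub : {β : K | β ^ q ≠ β ∧ β ^ (q + 1) / (β ^ q + β) = b} ⊆ P.roots.toFinset := by
    rintro β ⟨hβ, hβb⟩
    have hβ0 : β ≠ 0 := by rintro rfl; exact hβ (zero_pow hq)
    have hT : β ^ q + β ≠ 0 := by rintro hT; rw [hT, div_zero] at hβb; exact hb hβb.symm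
    have hN : β ^ (q + 1) = b * (β ^ q + β) := (div_eq_iff hT).1 hβb
    have : β * P.eval β = 0 := by
      simp only [P, eval_sub, eval_mul, eval_pow, eval_X, eval_C]
      linear_combination hN - b * mul_pow_sub_one hq β
    simpa [hP, hβ0] using this
  calc _ ≤ #P.roots.toFinset := by
        rw [← Set.ncard_coe_finset]; exact Set.ncard_le_ncard hsub (Finset.finite_toSet _)
    _ ≤ P.natDegree := (Multiset.toFinset_card_le _).trans (card_roots' P)
    _ ≤ q := hdeg

end

theorem stmt6_general (m q : ℕ) (hq : q = 2 ^ m)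
    (K : Type) [Field K] [Fintype K] (hK : Fintype.card K = q ^ 2) :
    (∀ β : K, β ^ q ≠ β →
        (β ^ (q + 1) / (β ^ q + β)) ^ q = β ^ (q + 1) / (β ^ q + β) ∧
          β ^ (q + 1) / (β ^ q + β) ≠ 0) ∧
    (∀ b : K, b ^ q = b → b ≠ 0 →
        Set.ncard {β : K | β ^ q ≠ β ∧ β ^ (q + 1) / (β ^ q + β) = b} = q) ∧
    Set.ncard {β : K | β ^ q ≠ β} = (q - 1) * q := by
  have : CharP K 2 := charP_of_card_eq_prime_pow (f := m * 2) (by rw [hK, hq, ← pow_mul])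
  have hq0 : q ≠ 0 := by have := FiniteField.two_le_of_card_eq_sq hK; omega
  have hF := FiniteField.ncard_setOf_pow_eq_self_of_card_eq_sq hK
  have hS₀ : {β : K | β ^ q ≠ β}.ncard = (q - 1) * q := by
    rw [← Set.compl_ofPred, Set.ncard_compl, hF, Nat.card_eq_fintype_card, hK, sq,
      Nat.sub_one_mul]
  have hF₀ : {b : K | b ^ q = b ∧ b ≠ 0}.ncard = q - 1 :=
    (Set.ncard_sdiff_singleton_of_mem (s := {x : K | x ^ q = x}) (zero_pow hq0)).trans
      (congrArg (· - 1) hF)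
  have hmaps (β : K) (hβ : β ^ q ≠ β) :
      (β ^ (q + 1) / (β ^ q + β)) ^ q = β ^ (q + 1) / (β ^ q + β) ∧
        β ^ (q + 1) / (β ^ q + β) ≠ 0 :=
    ⟨FiniteField.norm_div_trace_pow_eq_self hq hK β, norm_div_trace_ne_zero hq0 hβ⟩
  refine ⟨hmaps, fun b hb hb0 => ?_, hS₀⟩
  exact Set.ncard_filter_eq_of_ncard_eq_mul (s := {β : K | β ^ q ≠ β})
    (t := {b : K | b ^ q = b ∧ b ≠ 0}) (Set.toFinite _) (Set.toFinite _) hmaps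
    (fun b hb => ncard_setOf_norm_div_trace_eq_le hq0 hb.2) (by rw [hS₀, hF₀]) b ⟨hb, hb0⟩

/-- Let `q` be a power of `2` and `S_0 = F_{q^2} \ F_q`.  The map
`β ↦ β^{q+1} / (β^q + β)` from `S_0` to `F_q^*` is well defined, and each fiber
has exactly `q` elements; in particular `S_0` is partitioned into `q - 1`
subsets of size `q`. -/
theorem stmt6 (m q : ℕ) (hm : 0 < m) (hq : q = 2 ^ m)
    (K : Type) [Field K] [Fintype K] (hK : Fintype.card K = q ^ 2) :
    (∀ β : K, β ^ q ≠ β →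
        (β ^ (q + 1) / (β ^ q + β)) ^ q = β ^ (q + 1) / (β ^ q + β) ∧
          β ^ (q + 1) / (β ^ q + β) ≠ 0) ∧
    (∀ b : K, b ^ q = b → b ≠ 0 →
        Set.ncard {β : K | β ^ q ≠ β ∧ β ^ (q + 1) / (β ^ q + β) = b} = q) ∧
    Set.ncard {β : K | β ^ q ≠ β} = (q - 1) * q :=
  stmt6_general m q hq K hK
end

section
/- Let q = 2^{2l+1}. The number of α ∈ F_{q^2} \ F_q satisfying α^{2q} + α^2 = α^{q+1} is exactly 2q − 2. -/
/-!
Put `x = α ^ (q - 1)`. For `α ≠ 0` the equation reads `α ^ 2 (x ^ 2 + 1) = α ^ 2 x`, i.e.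
`x ^ 2 + x + 1 = 0` in characteristic `2`, and `α ^ q ≠ α` says `x ≠ 1`. So the solutions are the
`α` with `x ^ 3 = 1` but `x ≠ 1`: the `3 (q - 1)`-th roots of unity that are not `(q - 1)`-th
roots of unity. Since `3 ∣ 2 ^ (2l + 1) + 1 = q + 1`, both orders divide `q ^ 2 - 1`, so the
cyclic group `F_{q^2}ˣ` contains exactly `3 (q - 1) - (q - 1) = 2q - 2` of them.
-/

open Polynomial

namespace FiniteField

variable {K : Type*} [Field K] [Fintype K]

theorem exists_isPrimitiveRoot_of_dvd {n : ℕ} (hn : n ∣ Fintype.card K - 1) :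
    ∃ ζ : K, IsPrimitiveRoot ζ n := by
  classical
  obtain ⟨g, hg⟩ := IsCyclic.exists_ofOrder_eq_natCard (α := Kˣ)
  have hg : IsPrimitiveRoot (g : K) (Fintype.card K - 1) := by
    rw [IsPrimitiveRoot.coe_units_iff, ← Fintype.card_units, ← Nat.card_eq_fintype_card, ← hg]
    exact IsPrimitiveRoot.orderOf g
  obtain ⟨m, hm⟩ := hn
  exact ⟨_, hg.pow (by have := Fintype.one_lt_card (α := K); omega) (hm.trans (mul_comm n m))⟩

theorem ncard_pow_eq_one_of_dvd {n : ℕ} (hn : n ∣ Fintype.card K - 1) :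
    {x : K | x ^ n = 1}.ncard = n := by
  classical
  obtain ⟨ζ, hζ⟩ := exists_isPrimitiveRoot_of_dvd hn
  have hn0 : 0 < n := Nat.pos_of_dvd_of_pos hn (by have := Fintype.one_lt_card (α := K); omega)
  have : {x : K | x ^ n = 1} = nthRootsFinset n (1 : K) := by
    ext x
    simp [mem_nthRootsFinset hn0]
  rw [this, Set.ncard_coe_finset, hζ.card_nthRootsFinset]

end FiniteField

namespace CharTwo

variable {K : Type*} [Field K] [CharP K 2]

theorem sq_add_one_eq_self_iff {x : K} : x ^ 2 + 1 = x ↔ x ^ 3 = 1 ∧ x ≠ 1 := by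
  have h2 : (2 : K) = 0 := CharP.cast_eq_zero K 2
  constructor
  · intro hx
    refine ⟨by linear_combination (x - 1) * hx + x * (x - 1) * h2, ?_⟩
    rintro rfl
    exact one_ne_zero (by linear_combination -hx + h2 : (1 : K) = 0)
  · rintro ⟨hx3, hx1⟩
    have hcube : (x - 1) * (x ^ 2 + x + 1) = 0 := by linear_combination hx3
    have hquad := (mul_eq_zero.mp hcube).resolve_left (sub_ne_zero.mpr hx1)
    linear_combination hquad - x * h2

theorem pow_ne_self_and_eq_iff_pow_sub_one_cube_eq_one {q : ℕ} (hq : q ≠ 0) (α : K) :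
    (α ^ q ≠ α ∧ α ^ (2 * q) + α ^ 2 = α ^ (q + 1)) ↔
      (α ^ (q - 1)) ^ 3 = 1 ∧ α ^ (q - 1) ≠ 1 := by
  rcases eq_or_ne α 0 with rfl | hα
  · rcases eq_or_ne q 1 with rfl | hq1
    · simp
    · simp [zero_pow hq, zero_pow (show q - 1 ≠ 0 by omega)]
  obtain ⟨k, rfl⟩ := Nat.exists_eq_add_one_of_ne_zero hq
  have hne : α ^ (k + 1) ≠ α ↔ α ^ k ≠ 1 := by rw [pow_succ, Ne, mul_eq_right₀ hα]
  have heq : α ^ (2 * (k + 1)) + α ^ 2 = α ^ (k + 1 + 1) ↔ (α ^ k) ^ 2 + 1 = α ^ k :=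
    calc _ ↔ ((α ^ k) ^ 2 + 1) * α ^ 2 = α ^ k * α ^ 2 := by ring_nf
      _ ↔ _ := mul_left_inj' (pow_ne_zero 2 hα)
  rw [Nat.add_sub_cancel, hne, heq, sq_add_one_eq_self_iff]
  tauto

end CharTwo

theorem three_dvd_two_pow_add_one_of_odd {n : ℕ} (hn : Odd n) : 3 ∣ 2 ^ n + 1 := by
  simpa using Odd.nat_add_dvd_pow_add_pow 2 1 hn

/-- Let `q = 2^{2l+1}`.  The number of `α ∈ F_{q^2} \ F_q` satisfying
`α^{2q} + α^2 = α^{q+1}` is exactly `2q - 2`. -/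
theorem stmt10 (l q : ℕ) (hq : q = 2 ^ (2 * l + 1))
    (K : Type) [Field K] [Fintype K] (hK : Fintype.card K = q ^ 2) :
    Set.ncard {α : K | α ^ q ≠ α ∧ α ^ (2 * q) + α ^ 2 = α ^ (q + 1)} = 2 * q - 2 := by
  have hq0 : q ≠ 0 := by rw [hq]; positivity
  have : CharP K 2 := charP_of_card_eq_prime_pow (hK.trans (by rw [hq, ← pow_mul]))
  have hdvd : (q - 1) * 3 ∣ Fintype.card K - 1 := by
    rw [hK, ← one_pow 2, Nat.sq_sub_sq, mul_comm (q + 1)]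
    exact mul_dvd_mul_left _ (hq ▸ three_dvd_two_pow_add_one_of_odd (odd_two_mul_add_one l))
  have hset : {α : K | α ^ q ≠ α ∧ α ^ (2 * q) + α ^ 2 = α ^ (q + 1)} =
      {α : K | α ^ ((q - 1) * 3) = 1} \ {α : K | α ^ (q - 1) = 1} := by
    ext α
    simp only [Set.mem_sdiff, Set.mem_ofPred_eq, pow_mul α (q - 1) 3]
    exact CharTwo.pow_ne_self_and_eq_iff_pow_sub_one_cube_eq_one hq0 α
  have hsub : {α : K | α ^ (q - 1) = 1} ⊆ {α : K | α ^ ((q - 1) * 3) = 1} := fun α hα => by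
    rw [Set.mem_ofPred_eq] at hα ⊢
    rw [pow_mul, hα, one_pow]
  rw [hset, Set.ncard_sdiff hsub, FiniteField.ncard_pow_eq_one_of_dvd hdvd,
    FiniteField.ncard_pow_eq_one_of_dvd ((dvd_mul_right _ _).trans hdvd)]
  omega
end

section
/- Over F_4 = F_2(a) with a^2 + a + 1 = 0, the evaluation code of length 8 obtained by evaluating the space V spanned by {1, x, y, xy} at the 8 F_4-rational points (x, y) ∈ F_4^2 with x ∈ {a, a+1} and y^2 + y = x^2/(x+1), is an [8, 4, 2] linear code in which coordinates come in 4 pairs of equal values; in particular every codeword has even weight and the code has locality 1. -/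
/-!
Over each of the two values `a`, `a + 1` of `x` lie at most two of the points, since `y` is a
root of the quadratic `y ^ 2 + y = x ^ 2 / (x + 1)`; as the four points are distinct, each
fibre holds exactly two. On a fibre a function of `V` is affine in `y`, so vanishing at both
of its points kills both coefficients, which are affine in `x`; vanishing on both fibres then
kills `c`. The two coordinates attached to a point carry the same value, so weights are twice
the number of points in the support; for `(x₀, y₀)` one of the points over `a + 1`, the
function `(x - a) (y - y₀)` is supported on the other one.
-/

/-- The evaluation map sending coefficients `c = (c₀,c₁,c₂,c₃)` to the word
obtained by evaluating `c₀ + c₁·x + c₂·y + c₃·x·y` at the eight points of the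
code: the eight coordinates are indexed by `Fin 4 × Fin 2`, where the `Fin 4`
component enumerates the four rational points `(x, y)` and each point carries
two coordinates (the pair of places above it, on which functions of `V` are
constant). -/
def evalCode {F : Type} [Field F] (pts : Fin 4 → F × F)
    (c : Fin 4 → F) : Fin 4 × Fin 2 → F :=
  fun i => c 0 + c 1 * (pts i.1).1 + c 2 * (pts i.1).2 +
    c 3 * (pts i.1).1 * (pts i.1).2

open Finset

theorem Prod.snd_ne_of_fst_eq {α β : Type*} {p q : α × β} (h : p.1 = q.1) (hne : p ≠ q) :
    p.2 ≠ q.2 :=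
  fun h' => hne (Prod.ext h h')

theorem exists_pair_of_card_filter_eq_two {ι : Type*} [Fintype ι] [DecidableEq ι] {p : ι → Prop}
    [DecidablePred p] (h : #{j | p j} = 2) : ∃ j j', j ≠ j' ∧ ∀ k, p k ↔ k = j ∨ k = j' := by
  obtain ⟨j, j', hne, hs⟩ := card_eq_two.mp h
  exact ⟨j, j', hne, fun k => by simpa using Finset.ext_iff.mp hs k⟩

theorem card_fiber_eq_two {ι α β : Type*} [Fintype ι] [DecidableEq α] {pts : ι → α × β}
    (hcard : Fintype.card ι = 4) {x₁ x₂ : α} (hx : x₁ ≠ x₂)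
    (hfib : ∀ x₀, #{j | (pts j).1 = x₀} ≤ 2) (hpts : ∀ j, (pts j).1 = x₁ ∨ (pts j).1 = x₂) :
    #{j | (pts j).1 = x₁} = 2 ∧ #{j | (pts j).1 = x₂} = 2 := by
  have hnot : #{j | ¬(pts j).1 = x₁} = #{j | (pts j).1 = x₂} := by
    congr 1
    ext j
    rcases hpts j with h | h <;> simp [h, hx, hx.symm]
  have hsum := card_filter_add_card_filter_not (s := univ) fun j => (pts j).1 = x₁
  rw [hnot, card_univ, hcard] at hsum
  have h₁ := hfib x₁
  have h₂ := hfib x₂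
  omega

section DoubledWord

variable {ι M : Type*} [Zero M]

theorem ncard_setOf_fst_ne_zero (κ : Type*) (g : ι → M) :
    {i : ι × κ | g i.1 ≠ 0}.ncard = {j | g j ≠ 0}.ncard * Nat.card κ := by
  rw [← Set.ncard_univ, ← Set.ncard_prod]
  congr 1
  ext i
  simp

theorem ncard_setOf_fst_ne_zero_fin_two (g : ι → M) :
    {i : ι × Fin 2 | g i.1 ≠ 0}.ncard = 2 * {j | g j ≠ 0}.ncard := by
  simp [ncard_setOf_fst_ne_zero, mul_comm]

theorem two_le_ncard_setOf_fst_ne_zero [Finite ι] {g : ι → M} (hg : g ≠ 0) :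
    2 ≤ {i : ι × Fin 2 | g i.1 ≠ 0}.ncard := by
  obtain ⟨j, hj⟩ := Function.ne_iff.mp hg
  have hpos := (Set.ncard_pos (Set.toFinite {j | g j ≠ 0})).2 ⟨j, hj⟩
  rw [ncard_setOf_fst_ne_zero_fin_two]
  omega

end DoubledWord

section

variable {F : Type*} [Field F]

theorem eq_neg_one_sub_of_sq_add_self_eq {y z : F} (h : y ^ 2 + y = z ^ 2 + z) (hne : y ≠ z) :
    z = -1 - y := by
  have : (y - z) * (y + z + 1) = 0 := by linear_combination h
  rcases mul_eq_zero.mp this with h' | h'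
  · exact absurd (sub_eq_zero.mp h') hne
  · linear_combination h'

theorem eq_and_eq_of_add_mul_eq_add_mul {u v u' v' s t : F} (hst : s ≠ t)
    (hs : u + v * s = u' + v' * s) (ht : u + v * t = u' + v' * t) : u = u' ∧ v = v' := by
  have hv : v = v' := by
    have : (v - v') * (s - t) = 0 := by linear_combination hs - ht
    exact sub_eq_zero.mp ((mul_eq_zero.mp this).resolve_right (sub_ne_zero.mpr hst))
  exact ⟨by linear_combination hs - s * hv, hv⟩

theorem card_fiber_le_two {ι : Type*} [Fintype ι] [DecidableEq F] {pts : ι → F × F}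
    (hinj : Function.Injective pts) {g : F → F}
    (hg : ∀ j, (pts j).2 ^ 2 + (pts j).2 = g (pts j).1) (x₀ : F) :
    #{j | (pts j).1 = x₀} ≤ 2 := by
  by_contra! hlt
  obtain ⟨i, hi, j, hj, k, hk, hij, hik, hjk⟩ := two_lt_card.mp hlt
  simp only [mem_filter, mem_univ, true_and] at hi hj hk
  have hy_ne : ∀ {l m}, (pts l).1 = x₀ → (pts m).1 = x₀ → l ≠ m → (pts l).2 ≠ (pts m).2 :=
    fun hl hm hlm => Prod.snd_ne_of_fst_eq (hl.trans hm.symm) (hinj.ne hlm)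
  have hroot : ∀ {l m}, (pts l).1 = x₀ → (pts m).1 = x₀ →
      (pts l).2 ^ 2 + (pts l).2 = (pts m).2 ^ 2 + (pts m).2 :=
    fun hl hm => by rw [hg, hg, hl, hm]
  have hj' := eq_neg_one_sub_of_sq_add_self_eq (hroot hi hj) (hy_ne hi hj hij)
  have hk' := eq_neg_one_sub_of_sq_add_self_eq (hroot hi hk) (hy_ne hi hk hik)
  exact hy_ne hj hk hjk (hj'.trans hk'.symm)

def evalV (c : Fin 4 → F) (p : F × F) : F :=
  c 0 + c 1 * p.1 + c 2 * p.2 + c 3 * p.1 * p.2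

@[simp]
theorem evalV_zero (p : F × F) : evalV 0 p = 0 := by
  simp [evalV]

theorem evalV_sub_mul_sub (x₀ y₀ : F) (p : F × F) :
    evalV ![x₀ * y₀, -y₀, -x₀, 1] p = (p.1 - x₀) * (p.2 - y₀) := by
  simp only [evalV, Matrix.cons_val_zero, Matrix.cons_val_one, Matrix.cons_val_two,
    Matrix.cons_val_three, Matrix.head_cons, Matrix.tail_cons]
  ring

theorem evalV_fiber_coeffs {c d : Fin 4 → F} {p p' : F × F} (hx : p.1 = p'.1) (hp : p ≠ p')
    (h : evalV c p = evalV d p) (h' : evalV c p' = evalV d p') :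
    c 0 + c 1 * p.1 = d 0 + d 1 * p.1 ∧ c 2 + c 3 * p.1 = d 2 + d 3 * p.1 := by
  have hy := Prod.snd_ne_of_fst_eq hx hp
  simp only [evalV, ← hx] at h h'
  exact eq_and_eq_of_add_mul_eq_add_mul hy (by linear_combination h) (by linear_combination h')

theorem eq_of_evalV_eq_on_two_fibers {c d : Fin 4 → F} {p₁ p₁' p₂ p₂' : F × F}
    (hx₁ : p₁.1 = p₁'.1) (hx₂ : p₂.1 = p₂'.1) (hx : p₁.1 ≠ p₂.1) (hp₁ : p₁ ≠ p₁') (hp₂ : p₂ ≠ p₂')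
    (h₁ : evalV c p₁ = evalV d p₁) (h₁' : evalV c p₁' = evalV d p₁')
    (h₂ : evalV c p₂ = evalV d p₂) (h₂' : evalV c p₂' = evalV d p₂') :
    c = d := by
  obtain ⟨e₀₁, e₂₃⟩ := evalV_fiber_coeffs hx₁ hp₁ h₁ h₁'
  obtain ⟨f₀₁, f₂₃⟩ := evalV_fiber_coeffs hx₂ hp₂ h₂ h₂'
  obtain ⟨h0, h1⟩ := eq_and_eq_of_add_mul_eq_add_mul hx e₀₁ f₀₁
  obtain ⟨h2, h3⟩ := eq_and_eq_of_add_mul_eq_add_mul hx e₂₃ f₂₃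
  ext i
  fin_cases i <;> assumption

section TwoFibres

variable {ι : Type*} {pts : ι → F × F} {x₁ x₂ : F} {j₁ j₁' j₂ j₂' : ι}

theorem evalV_comp_injective (hinj : Function.Injective pts) (hx : x₁ ≠ x₂)
    (hj₁ : j₁ ≠ j₁') (hj₂ : j₂ ≠ j₂') (mem₁ : ∀ j, (pts j).1 = x₁ ↔ j = j₁ ∨ j = j₁')
    (mem₂ : ∀ j, (pts j).1 = x₂ ↔ j = j₂ ∨ j = j₂') :
    Function.Injective fun c j => evalV c (pts j) := by
  intro c d h
  have e : ∀ j, evalV c (pts j) = evalV d (pts j) := congrFun h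
  have hx₁ := (mem₁ j₁).2 (.inl rfl)
  have hx₂ := (mem₂ j₂).2 (.inl rfl)
  exact eq_of_evalV_eq_on_two_fibers (hx₁.trans ((mem₁ j₁').2 (.inr rfl)).symm)
    (hx₂.trans ((mem₂ j₂').2 (.inr rfl)).symm) (hx₁ ▸ hx₂ ▸ hx)
    (hinj.ne hj₁) (hinj.ne hj₂) (e j₁) (e j₁') (e j₂) (e j₂')

theorem setOf_evalV_sub_mul_sub_ne_zero (hinj : Function.Injective pts) (hx : x₁ ≠ x₂)
    (hj₂ : j₂ ≠ j₂') (hcover : ∀ j, (pts j).1 = x₁ ∨ (pts j).1 = x₂)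
    (mem₂ : ∀ j, (pts j).1 = x₂ ↔ j = j₂ ∨ j = j₂') :
    {j | evalV ![x₁ * (pts j₂).2, -(pts j₂).2, -x₁, 1] (pts j) ≠ 0} = {j₂'} := by
  ext j
  simp only [evalV_sub_mul_sub, Set.mem_ofPred_eq, mul_ne_zero_iff, sub_ne_zero,
    Set.mem_singleton_iff]
  constructor
  · rintro ⟨hxj, hyj⟩
    rcases (mem₂ j).1 ((hcover j).resolve_left hxj) with rfl | rfl
    · exact absurd rfl hyj
    · rfl
  · rintro rfl
    have hx₂' := (mem₂ j).2 (.inr rfl)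
    exact ⟨hx₂' ▸ hx.symm,
      Prod.snd_ne_of_fst_eq (hx₂'.trans ((mem₂ j₂).2 (.inl rfl)).symm) (hinj.ne hj₂.symm)⟩

end TwoFibres

end

theorem stmt17_general (F : Type) [Field F]
    (a : F)
    (pts : Fin 4 → F × F) (hinj : Function.Injective pts)
    (hpts : ∀ j, ((pts j).1 = a ∨ (pts j).1 = a + 1) ∧
        (pts j).2 ^ 2 + (pts j).2 = (pts j).1 ^ 2 / ((pts j).1 + 1)) :
    Function.Injective (evalCode pts) ∧
    (∀ c : Fin 4 → F, ∀ j : Fin 4, ∀ s t : Fin 2,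
        evalCode pts c (j, s) = evalCode pts c (j, t)) ∧
    (∀ c : Fin 4 → F, c ≠ 0 →
        2 ≤ Set.ncard {i : Fin 4 × Fin 2 | evalCode pts c i ≠ 0}) ∧
    (∃ c : Fin 4 → F, c ≠ 0 ∧
        Set.ncard {i : Fin 4 × Fin 2 | evalCode pts c i ≠ 0} = 2) ∧
    (∀ c : Fin 4 → F, Even (Set.ncard {i : Fin 4 × Fin 2 | evalCode pts c i ≠ 0})) := by
  classical
  have hx : a ≠ a + 1 := by simp
  obtain ⟨hcard₁, hcard₂⟩ := card_fiber_eq_two (Fintype.card_fin 4) hx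
    (card_fiber_le_two hinj (g := fun x => x ^ 2 / (x + 1)) fun j => (hpts j).2)
    fun j => (hpts j).1
  obtain ⟨j₁, j₁', hj₁, mem₁⟩ := exists_pair_of_card_filter_eq_two hcard₁
  obtain ⟨j₂, j₂', hj₂, mem₂⟩ := exists_pair_of_card_filter_eq_two hcard₂
  have hinjV := evalV_comp_injective hinj hx hj₁ hj₂ mem₁ mem₂
  refine ⟨fun c d h => hinjV (funext fun j => congrFun h (j, 0)), fun c j s t => rfl,
    fun c hc => ?_, ⟨![a * (pts j₂).2, -(pts j₂).2, -a, 1], ?_, ?_⟩,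
    fun c => ⟨_, (ncard_setOf_fst_ne_zero_fin_two fun j => evalV c (pts j)).trans (two_mul _)⟩⟩
  · exact two_le_ncard_setOf_fst_ne_zero fun h => hc (hinjV (h.trans (funext fun j => by simp)))
  · exact fun h => by simpa using congrFun h 3
  · refine (ncard_setOf_fst_ne_zero_fin_two
      fun j => evalV ![a * (pts j₂).2, -(pts j₂).2, -a, 1] (pts j)).trans ?_
    rw [setOf_evalV_sub_mul_sub_ne_zero hinj hx hj₂ (fun j => (hpts j).1) mem₂, Set.ncard_singleton]

/-- Over `F_4 = F_2(a)` with `a^2 + a + 1 = 0`, evaluating the space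
`V = span{1, x, y, xy}` at the eight rational points lying over the four points
`(x, y) ∈ F_4^2` with `x ∈ {a, a+1}` and `y^2 + y = x^2/(x+1)` (each such point
contributing a pair of coordinates with equal values) yields an `[8, 4, 2]`
linear code: the evaluation map is injective (dimension `4`), coordinates come
in `4` pairs of equal values, every nonzero codeword has weight at least `2`
(and weight `2` is attained), and every codeword has even weight; in
particular the code has locality `1`. -/
theorem stmt17 (F : Type) [Field F] [Fintype F] (hF : Fintype.card F = 4)
    (a : F) (ha : a ^ 2 + a + 1 = 0)
    (pts : Fin 4 → F × F) (hinj : Function.Injective pts)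
    (hpts : ∀ j, ((pts j).1 = a ∨ (pts j).1 = a + 1) ∧
        (pts j).2 ^ 2 + (pts j).2 = (pts j).1 ^ 2 / ((pts j).1 + 1)) :
    Function.Injective (evalCode pts) ∧
    (∀ c : Fin 4 → F, ∀ j : Fin 4, ∀ s t : Fin 2,
        evalCode pts c (j, s) = evalCode pts c (j, t)) ∧
    (∀ c : Fin 4 → F, c ≠ 0 →
        2 ≤ Set.ncard {i : Fin 4 × Fin 2 | evalCode pts c i ≠ 0}) ∧
    (∃ c : Fin 4 → F, c ≠ 0 ∧
        Set.ncard {i : Fin 4 × Fin 2 | evalCode pts c i ≠ 0} = 2) ∧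
    (∀ c : Fin 4 → F, Even (Set.ncard {i : Fin 4 × Fin 2 | evalCode pts c i ≠ 0})) :=
  stmt17_general F a pts hinj hpts
end
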